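/- Let n ≥ 2 and let i, j be integers with 2 ≤ i < j ≤ n, and set z = (i-1, j) ∈ S_n. Then for every t with i-1 ≤ t ≤ j-1, the simple transposition s_t is a right descent of z·s_{i-1}s_i⋯s_{t-1} (the product s_{i-1}⋯s_{t-1} being the identity when t = i-1); that is, (z·s_{i-1}s_i⋯s_{t-1})(t) > (z·s_{i-1}s_i⋯s_{t-1})(t+1). -/
import Mathlib


/-- The longest element `w₀` of the symmetric group on `Fin n`,
sending `t` to `n - 1 - t` (`0`-based), i.e. `t ↦ n + 1 - t` in `1`-based terms. -/
def w0 (n : ℕ) : Equiv.Perm (Fin n) :=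
  ⟨Fin.rev, Fin.rev, fun x => Fin.rev_rev x, fun x => Fin.rev_rev x⟩

/-- The Coxeter length of a permutation: its number of inversions. -/
def len {n : ℕ} (x : Equiv.Perm (Fin n)) : ℕ :=
  (Finset.univ.filter fun ab : Fin n × Fin n => ab.1 < ab.2 ∧ x ab.2 < x ab.1).card

/-- The pattern `p ∈ S_m` consecutively appears in `x ∈ S_n` at (`1`-based) position `i`.
Permutations of `{1, …, N}` are modelled (`0`-based) as permutations of `Fin N`. -/
def consecAppearsAt {m n : ℕ} (p : Equiv.Perm (Fin m)) (x : Equiv.Perm (Fin n)) (i : ℕ) :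
    Prop :=
  ∃ h : 1 ≤ i ∧ i + m ≤ n + 1,
    ∀ a b : Fin m,
      p a < p b ↔
        x ⟨i - 1 + a.val, by have := a.isLt; omega⟩ <
          x ⟨i - 1 + b.val, by have := b.isLt; omega⟩

/-- `x` consecutively contains the pattern `p`. -/
def consecContains {m n : ℕ} (p : Equiv.Perm (Fin m)) (x : Equiv.Perm (Fin n)) : Prop :=
  ∃ i : ℕ, consecAppearsAt p x i

/-- The pattern `2143 ∈ S₄` (`0`-based one-line notation: `1,0,3,2`). -/
def p2143 : Equiv.Perm (Fin 4) := Equiv.swap 0 1 * Equiv.swap 2 3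

/-- The pattern `14325 ∈ S₅` (`0`-based one-line notation: `0,3,2,1,4`). -/
def p14325 : Equiv.Perm (Fin 5) := Equiv.swap 1 3

/-- The pattern `1536247 ∈ S₇` (`0`-based one-line notation: `0,4,2,5,1,3,6`). -/
def p1536247 : Equiv.Perm (Fin 7) := Equiv.swap 1 4 * Equiv.swap 3 5

/-- The pattern `1462537 ∈ S₇` (`0`-based one-line notation: `0,3,5,1,4,2,6`). -/
def p1462537 : Equiv.Perm (Fin 7) := Equiv.swap 1 3 * Equiv.swap 2 5

/-- The pattern `1423 ∈ S₄` (`0`-based one-line notation: `0,3,1,2`). -/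
def p1423 : Equiv.Perm (Fin 4) := Equiv.swap 1 2 * Equiv.swap 1 3

/-- The pattern `2314 ∈ S₄` (`0`-based one-line notation: `1,2,0,3`). -/
def p2314 : Equiv.Perm (Fin 4) := Equiv.swap 0 2 * Equiv.swap 0 1

/-- The simple transposition `s_t = (t, t+1)` (`1`-based) as a permutation of `Fin n`
(junk value `1` if `t` is out of range). -/
def simpleT (n t : ℕ) : Equiv.Perm (Fin n) :=
  if h : 1 ≤ t ∧ t < n then Equiv.swap ⟨t - 1, by omega⟩ ⟨t, h.2⟩ else 1

/-- The product `s_a s_{a-1} ⋯ s_b` of simple transpositions with descending indices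
(the identity if `b > a`). -/
def descProd (n a b : ℕ) : Equiv.Perm (Fin n) :=
  ((List.range (a + 1 - b)).map fun t => simpleT n (a - t)).prod

/-- The product `s_a s_{a+1} ⋯ s_b` of simple transpositions with ascending indices
(the identity if `b < a`). -/
def ascProd (n a b : ℕ) : Equiv.Perm (Fin n) :=
  ((List.range (b + 1 - a)).map fun t => simpleT n (a + t)).prod

/-- `w s_b < w`, i.e. `s_b` is a right descent of `w`: `w(b) > w(b+1)` (`1`-based). -/
def rdes {n : ℕ} (w : Equiv.Perm (Fin n)) (b : ℕ) : Prop :=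
  ∃ h : 1 ≤ b ∧ b < n, w ⟨b, h.2⟩ < w ⟨b - 1, by omega⟩

/-- `w s_b > w`, i.e. `s_b` is a right ascent of `w`: `w(b) < w(b+1)` (`1`-based). -/
def rasc {n : ℕ} (w : Equiv.Perm (Fin n)) (b : ℕ) : Prop :=
  ∃ h : 1 ≤ b ∧ b < n, w ⟨b - 1, by omega⟩ < w ⟨b, h.2⟩

/-- `(W 1, …, W l)` is a strong right Bruhat walk: consecutive entries differ by right
multiplication by a simple transposition. -/
def isWalk {n : ℕ} (l : ℕ) (W : ℕ → Equiv.Perm (Fin n)) : Prop :=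
  ∀ t : ℕ, 1 ≤ t → t + 1 ≤ l → ∃ b : ℕ, 1 ≤ b ∧ b < n ∧ W (t + 1) = W t * simpleT n b

/-- The walk `(W 1, …, W l)` is compatible with the reduced expression
`s_{ι 1} s_{ι 2} ⋯ s_{ι l}`. -/
def compat {n : ℕ} (l : ℕ) (ι : ℕ → ℕ) (W : ℕ → Equiv.Perm (Fin n)) : Prop :=
  ∀ t : ℕ, 1 ≤ t → t ≤ l →
    rdes (W t) (ι t) ∧
    (2 ≤ t → rasc (W t) (ι (t - 1))) ∧
    (t + 1 ≤ l → rasc (W t) (ι (t + 1)))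

/-- Membership in `X_{m,n}^i`: the one-line values at positions `i, i+1, …, i+m-1`
(`1`-based) are increasing. -/
def windowIncr {n : ℕ} (m i : ℕ) (x : Equiv.Perm (Fin n)) : Prop :=
  ∀ a b : Fin n, i - 1 ≤ a.val → a < b → b.val < i - 1 + m → x a < x b

/-- The order-preserving identification of `Fin m` with the window
`{o, o+1, …, o+m-1}` inside `Fin n`. -/
def shiftEquiv (o m n : ℕ) (h : o + m ≤ n) :
    Fin m ≃ {x : Fin n // o ≤ x.val ∧ x.val < o + m} where
  toFun a := ⟨⟨o + a.val, by have := a.isLt; omega⟩, by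
    refine ⟨Nat.le_add_right _ _, ?_⟩
    show o + a.val < o + m
    have := a.isLt; omega⟩
  invFun x := ⟨x.val.val - o, by have := x.prop; omega⟩
  left_inv a := by
    apply Fin.ext
    show o + a.val - o = a.val
    omega
  right_inv x := by
    apply Subtype.ext
    apply Fin.ext
    show o + (x.val.val - o) = x.val.val
    have := x.prop
    omega

/-- The shift `F_{m,n}^i : S_m → S_n`, sending `i+a-1 ↦ i+p(a)-1` (`1`-based) and fixing
all other points. -/
def shiftPerm (m n i : ℕ) (h : i - 1 + m ≤ n) (p : Equiv.Perm (Fin m)) :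
    Equiv.Perm (Fin n) :=
  Equiv.Perm.extendDomain p (shiftEquiv (i - 1) m n h)


lemma simpleT_eq (n b : ℕ) (h1 : 1 ≤ b) (h2 : b < n) :
    simpleT n b = Equiv.swap ⟨b - 1, by omega⟩ ⟨b, h2⟩ := by
  unfold simpleT; rw [dif_pos ⟨h1, h2⟩]

lemma ascProd_nil (n a b : ℕ) (h : b + 1 ≤ a) : ascProd n a b = 1 := by
  unfold ascProd
  have : b + 1 - a = 0 := by omega
  simp [this]

lemma ascProd_succ (n a b : ℕ) (h : a ≤ b + 1) :
    ascProd n a (b + 1) = ascProd n a b * simpleT n (b + 1) := by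
  unfold ascProd
  have h1 : b + 1 + 1 - a = (b + 1 - a) + 1 := by omega
  rw [h1, List.range_succ, List.map_append, List.prod_append]
  have h2 : a + (b + 1 - a) = b + 1 := by omega
  simp [h2]

lemma key (n i : ℕ) (hi : 2 ≤ i) (hn : i ≤ n) :
    ∀ t (ht1 : i - 1 ≤ t) (ht2 : t < n),
      (ascProd n (i - 1) (t - 1)) ⟨t - 1, by omega⟩ = ⟨i - 2, by omega⟩ ∧
      ∀ x : Fin n, t ≤ x.val → ascProd n (i - 1) (t - 1) x = x := by
  intro t
  induction t with
  | zero => intro h1 h2; omega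
  | succ t ih =>
    intro h1 h2
    by_cases hb : i - 1 ≤ t
    · -- inductive step: t + 1 ≥ i, Q(t) = Q(t-1) * s_t
      have ht1 : 1 ≤ t := by omega
      have htn : t < n := by omega
      have hQ : ascProd n (i - 1) (t + 1 - 1) = ascProd n (i - 1) (t - 1) * simpleT n t := by
        have e : t + 1 - 1 = (t - 1) + 1 := by omega
        rw [e, ascProd_succ n (i - 1) (t - 1) (by omega)]
        congr 1
        congr 1
        omega
      obtain ⟨ih1, ih2⟩ := ih hb htn
      have hs : simpleT n t = Equiv.swap ⟨t - 1, by omega⟩ ⟨t, htn⟩ := simpleT_eq n t ht1 htn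
      constructor
      · rw [hQ, Equiv.Perm.mul_apply, hs]
        have e1 : (⟨t + 1 - 1, by omega⟩ : Fin n) = ⟨t, htn⟩ := by
          apply Fin.ext; simp
        rw [e1, Equiv.swap_apply_right]
        exact ih1
      · intro x hx
        rw [hQ, Equiv.Perm.mul_apply, hs]
        rw [Equiv.swap_apply_of_ne_of_ne]
        · exact ih2 x (by omega)
        · intro hc; rw [hc] at hx; simp only [Fin.val_mk] at hx; omega
        · intro hc; rw [hc] at hx; simp only [Fin.val_mk] at hx; omega
    · -- base case: t + 1 = i - 1
      have ht : t + 1 = i - 1 := by omega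
      have hnil : ascProd n (i - 1) (t + 1 - 1) = 1 := ascProd_nil n (i - 1) (t + 1 - 1) (by omega)
      rw [hnil]
      constructor
      · apply Fin.ext; simp; omega
      · intro x hx; simp

theorem stmt18 (n i j : ℕ) (hn : 2 ≤ n) (hi : 2 ≤ i) (hij : i < j) (hj : j ≤ n)
    (z : Equiv.Perm (Fin n))
    (hz : z = Equiv.swap ⟨i - 2, by omega⟩ ⟨j - 1, by omega⟩) :
    ∀ t : ℕ, i - 1 ≤ t → t ≤ j - 1 → rdes (z * ascProd n (i - 1) (t - 1)) t := by
  intro t ht1 ht2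
  have htn : t < n := by omega
  have ht0 : 1 ≤ t := by omega
  refine ⟨⟨ht0, htn⟩, ?_⟩
  obtain ⟨k1, k2⟩ := key n i hi (by omega) t ht1 htn
  rw [Equiv.Perm.mul_apply, Equiv.Perm.mul_apply, k1, k2 ⟨t, htn⟩ le_rfl, hz]
  rw [Equiv.swap_apply_left]
  by_cases hc : t = j - 1
  · have : (⟨t, htn⟩ : Fin n) = ⟨j - 1, by omega⟩ := by apply Fin.ext; simp; omega
    rw [this, Equiv.swap_apply_right]
    show i - 2 < j - 1
    omega
  · rw [Equiv.swap_apply_of_ne_of_ne]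
    · show t < j - 1; omega
    · intro h; have := congrArg Fin.val h; simp at this; omega
    · intro h; have := congrArg Fin.val h; simp at this; omega
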